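/- There exists a 32-number USV1B4 in M_{4×9}, i.e., a family of thirty-two 4-singular-value-1 matrices {A_i}_{i=1}^{32} in the space of 4×9 complex matrices (each satisfying A_i·A_iᴴ = I_4) with Tr(A_iᴴ A_j) = 4·δ_{ij} for all i, j, such that every B ∈ M_{4×9} with Tr(A_iᴴ B) = 0 for all i does not satisfy B·Bᴴ = I_4. Equivalently, there is a 32-number unextendible maximally entangled basis (UMEB) in ℂ^4 ⊗ ℂ^9. -/
import Mathlib

open Matrix

namespace UMEB49

open GaussianInt

/-- Pauli matrix entries over the Gaussian integers. -/
def s : ℕ → ℕ → ℕ → GaussianInt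
  | 0, a, b => if a = b then 1 else 0
  | 1, a, b => if a = b then 0 else 1
  | 2, a, b => if a = 0 ∧ b = 1 then -⟨0,1⟩ else if a = 1 ∧ b = 0 then ⟨0,1⟩ else 0
  | 3, a, b => if a = b then (if a = 0 then 1 else -1) else 0
  | _+4, _, _ => 0

/-- The 32 Gaussian-integer matrices: two 4×4 blocks of Pauli tensor products. -/
def M (i : Fin 32) : Matrix (Fin 4) (Fin 9) GaussianInt :=
  Matrix.of fun r c =>
    if (c:ℕ)/4 = (i:ℕ)/16 ∧ (c:ℕ) < 8 then
      s ((i:ℕ)/4 % 4) ((r:ℕ)/2) ((c:ℕ)%4/2) * s ((i:ℕ)%4) ((r:ℕ)%2) ((c:ℕ)%2)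
    else 0

set_option maxHeartbeats 1000000 in
lemma M_unitary : ∀ i : Fin 32, M i * (M i)ᴴ = 1 := by decide

set_option maxHeartbeats 8000000 in
lemma M_trace : ∀ i j : Fin 32, ((M i)ᴴ * M j).trace = if i = j then 4 else 0 := by decide

set_option maxHeartbeats 8000000 in
lemma M_complete : ∀ (r r' : Fin 4) (c c' : Fin 9), (c:ℕ) < 8 →
    (∑ i : Fin 32, star (M i r c) * M i r' c') = if r = r' ∧ c = c' then 4 else 0 := by decide

lemma star_toComplex (x : GaussianInt) : star (toComplex x) = toComplex (star x) := by
  simp [toComplex_def, Zsqrtd.re_star, Zsqrtd.im_star, Complex.ext_iff, RCLike.star_def]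

/-- The complex matrices. -/
noncomputable def A (i : Fin 32) : Matrix (Fin 4) (Fin 9) ℂ := (M i).map toComplex

lemma A_apply (i : Fin 32) (r : Fin 4) (c : Fin 9) : A i r c = toComplex (M i r c) := rfl

lemma A_conjT (i : Fin 32) : (A i)ᴴ = ((M i)ᴴ).map toComplex := by
  ext r c
  simp [A, conjTranspose_apply, Matrix.map_apply, RCLike.star_def, star_toComplex]

lemma map_trace' {n : Type*} [Fintype n] (X : Matrix n n GaussianInt) :
    (X.map toComplex).trace = toComplex X.trace := by
  simp only [Matrix.trace, Matrix.diag, Matrix.map_apply]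
  exact (map_sum toComplex _ _).symm

end UMEB49

open UMEB49 GaussianInt

/-- Example 4.3: there is a 32-number USV1B4 in `M_{4×9}`, i.e., a
32-number UMEB in `ℂ^4 ⊗ ℂ^9` (a `4`-singular-value-1 matrix `A ∈ M_{4×9}` is
characterized by `A·Aᴴ = I_4`). -/
theorem exists_32_UMEB_4x9 :
    ∃ A : Fin 32 → Matrix (Fin 4) (Fin 9) ℂ,
      (∀ i, A i * (A i)ᴴ = 1) ∧
      (∀ i j, ((A i)ᴴ * A j).trace = if i = j then (4 : ℂ) else 0) ∧
      (∀ B : Matrix (Fin 4) (Fin 9) ℂ,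
        (∀ i, ((A i)ᴴ * B).trace = 0) → ¬ (B * Bᴴ = 1)) := by
  refine ⟨UMEB49.A, fun i => ?_, fun i j => ?_, fun B hB hBB => ?_⟩
  · rw [A_conjT, UMEB49.A, ← Matrix.map_mul, M_unitary]
    ext r c
    simp [Matrix.map_apply, Matrix.one_apply, apply_ite toComplex]
  · rw [A_conjT, UMEB49.A, ← Matrix.map_mul, map_trace', M_trace]
    split <;> simp [toComplex_def]
  · -- Step 1: B vanishes on the first eight columns.
    have hzero : ∀ (r : Fin 4) (c : Fin 9), (c:ℕ) < 8 → B r c = 0 := by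
      intro r₀ c₀ h8
      have key : ∑ i : Fin 32, star (A i r₀ c₀) * star (((A i)ᴴ * B).trace) = 0 := by
        simp [hB]
      have htr : ∀ i : Fin 32, star (((A i)ᴴ * B).trace) =
          ∑ c : Fin 9, ∑ r : Fin 4, A i r c * star (B r c) := by
        intro i
        simp [Matrix.trace, Matrix.diag, Matrix.mul_apply, conjTranspose_apply,
          star_sum, star_mul', mul_comm]
      rw [Finset.sum_congr rfl (fun i _ => by rw [htr i])] at key
      have key2 : ∑ c : Fin 9, ∑ r : Fin 4,
          (∑ i : Fin 32, star (A i r₀ c₀) * A i r c) * star (B r c) = 0 := by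
        rw [← key]
        calc ∑ c : Fin 9, ∑ r : Fin 4,
              (∑ i : Fin 32, star (A i r₀ c₀) * A i r c) * star (B r c)
            = ∑ c : Fin 9, ∑ r : Fin 4, ∑ i : Fin 32,
                star (A i r₀ c₀) * A i r c * star (B r c) :=
              Finset.sum_congr rfl fun c _ => Finset.sum_congr rfl fun r _ =>
                Finset.sum_mul _ _ _
          _ = ∑ c : Fin 9, ∑ i : Fin 32, ∑ r : Fin 4,
                star (A i r₀ c₀) * A i r c * star (B r c) :=
              Finset.sum_congr rfl fun c _ => Finset.sum_comm
          _ = ∑ i : Fin 32, ∑ c : Fin 9, ∑ r : Fin 4,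
                star (A i r₀ c₀) * A i r c * star (B r c) := Finset.sum_comm
          _ = ∑ i : Fin 32, star (A i r₀ c₀) *
                ∑ c : Fin 9, ∑ r : Fin 4, A i r c * star (B r c) := by
              refine Finset.sum_congr rfl fun i _ => ?_
              rw [Finset.mul_sum]
              refine Finset.sum_congr rfl fun c _ => ?_
              rw [Finset.mul_sum]
              exact Finset.sum_congr rfl fun r _ => by ring
      have hsum : ∀ (r : Fin 4) (c : Fin 9),
          (∑ i : Fin 32, star (A i r₀ c₀) * A i r c) =
            if r₀ = r ∧ c₀ = c then 4 else 0 := by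
        intro r c
        have := M_complete r₀ r c₀ c h8
        have : toComplex (∑ i : Fin 32, star (M i r₀ c₀) * M i r c) =
            toComplex (if r₀ = r ∧ c₀ = c then 4 else 0) := by rw [this]
        rw [map_sum] at this
        simp only [_root_.map_mul, ← star_toComplex, ← A_apply] at this
        rw [this]
        split <;> simp [toComplex_def]
      rw [Finset.sum_congr rfl (fun c _ => Finset.sum_congr rfl
        (fun r _ => by rw [hsum r c]))] at key2
      have : (4 : ℂ) * star (B r₀ c₀) = 0 := by
        rw [← key2]
        simp [ite_and, Finset.sum_ite_eq, ite_mul]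
      have h4 : star (B r₀ c₀) = 0 := by
        rcases mul_eq_zero.1 this with h | h
        · norm_num at h
        · exact h
      simpa using congrArg star h4
    have hlast : ∀ (r : Fin 4) (c : Fin 9), c ≠ 8 → B r c = 0 := by
      intro r c hc
      refine hzero r c ?_
      have h1 := c.isLt
      have h2 : (c : ℕ) ≠ 8 := Fin.val_ne_of_ne hc
      omega
    have hent : ∀ r r' : Fin 4, (B * Bᴴ) r r' = B r 8 * star (B r' 8) := by
      intro r r'
      rw [Matrix.mul_apply, Finset.sum_eq_single (8 : Fin 9)]
      · simp [conjTranspose_apply]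
      · intro c _ hc
        rw [hlast r c hc, zero_mul]
      · simp
    have h00 : B 0 8 * star (B 0 8) = 1 := by
      have := hent 0 0
      rw [hBB] at this
      simpa [Matrix.one_apply] using this.symm
    have h11 : B 1 8 * star (B 1 8) = 1 := by
      have := hent 1 1
      rw [hBB] at this
      simpa [Matrix.one_apply] using this.symm
    have h01 : B 0 8 * star (B 1 8) = 0 := by
      have := hent 0 1
      rw [hBB] at this
      simpa [Matrix.one_apply] using this.symm
    rcases mul_eq_zero.1 h01 with h | h
    · rw [h, zero_mul] at h00
      exact one_ne_zero h00.symm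
    · rw [h, mul_zero] at h11
      exact one_ne_zero h11.symm
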